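/- arXiv:1909.06291 — 2 statements merged into one kernel-verified Lean document; each statement's English description precedes it below -/
import Mathlib

section
/- Let (Ω, P) be a probability space, W: Ω → ℝ a random variable, and X: ℝ × Ω → ℝ a jointly measurable random function such that: (i) for almost every ω, the map y ↦ X(y, ω) is nondecreasing; (ii) for every y ∈ ℝ, X(y, ·) − y has the same distribution as W. Then for every S > 0, E[λ{y ∈ ℝ : X(y, ·) ∈ (−S, S]}] ≤ 2S + 2·E|W|, where λ is Lebesgue measure. -/
open MeasureTheory ENNReal

/-- Moment bound for the pushforward of Lebesgue measure under a monotone random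
function whose one-point motions are distributed as `y + W`:
`E λ{y : X(y) ∈ (-S,S]} ≤ 2S + 2E|W|`. -/
theorem stmt_11 {Ω : Type*} {m : MeasurableSpace Ω} (P : Measure Ω)
    [IsProbabilityMeasure P]
    (W : Ω → ℝ) (hW : Measurable W) (hWint : Integrable W P)
    (X : ℝ → Ω → ℝ)
    (hXmeas : Measurable (Function.uncurry X))
    (hmono : ∀ᵐ ω ∂P, Monotone fun y => X y ω)
    (hlaw : ∀ y : ℝ, P.map (fun ω => X y ω - y) = P.map W) :
    ∀ S : ℝ, 0 < S →
      (∫⁻ ω, volume {y : ℝ | X y ω ∈ Set.Ioc (-S) S} ∂P)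
        ≤ ENNReal.ofReal (2 * S + 2 * ∫ ω, |W ω| ∂P) := by
  intro S hS
  have hSet : MeasurableSet (Set.Ioc (-S) S) := measurableSet_Ioc
  set g : ℝ → ℝ≥0∞ := (Set.Ioc (-S) S).indicator 1 with hg
  have hgmeas : Measurable g := measurable_const.indicator hSet
  have hmeasF : Measurable fun p : ℝ × Ω => g (X p.1 p.2) := hgmeas.comp hXmeas
  -- Step 1: volume of the set as an integral of an indicator
  have h1 : ∀ ω, volume {y : ℝ | X y ω ∈ Set.Ioc (-S) S}
      = ∫⁻ y, g (X y ω) := by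
    intro ω
    have hXy : Measurable fun y => X y ω :=
      hXmeas.comp (measurable_id.prodMk measurable_const)
    show volume ((fun y => X y ω) ⁻¹' Set.Ioc (-S) S) = _
    rw [← lintegral_indicator_one (hXy hSet)]
    refine lintegral_congr fun y => ?_
    by_cases h : X y ω ∈ Set.Ioc (-S) S
    · simp [hg, Set.indicator_of_mem, h, Set.mem_preimage]
    · simp [hg, Set.indicator_of_notMem, h, Set.mem_preimage]
  -- Step 2: Tonelli swap
  have h2 : (∫⁻ ω, ∫⁻ y, g (X y ω) ∂volume ∂P)
      = ∫⁻ y, ∫⁻ ω, g (X y ω) ∂P ∂volume :=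
    (lintegral_lintegral_swap hmeasF.aemeasurable).symm
  -- Step 3: identify the inner integral via the law of X y
  have h3 : ∀ y : ℝ, (∫⁻ ω, g (X y ω) ∂P)
      = P.map W (Set.Ioc (-S - y) (S - y)) := by
    intro y
    have hXyω : Measurable fun ω => X y ω :=
      hXmeas.comp (measurable_const.prodMk measurable_id)
    have hm : Measurable fun ω => X y ω - y := hXyω.sub measurable_const
    have e1 : (∫⁻ ω, g (X y ω) ∂P)
        = P ((fun ω => X y ω) ⁻¹' Set.Ioc (-S) S) := by
      rw [← lintegral_indicator_one (hXyω hSet)]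
      refine lintegral_congr fun ω => ?_
      by_cases h : X y ω ∈ Set.Ioc (-S) S
      · simp [hg, Set.indicator_of_mem, h, Set.mem_preimage]
      · simp [hg, Set.indicator_of_notMem, h, Set.mem_preimage]
    rw [e1, ← hlaw y, Measure.map_apply hm measurableSet_Ioc]
    congr 1
    ext ω
    simp only [Set.mem_preimage, Set.mem_Ioc]
    constructor <;> intro h <;> exact ⟨by linarith [h.1], by linarith [h.2]⟩
  -- Step 4: rewrite map W measure as indicator integral
  have h4 : ∀ y : ℝ, P.map W (Set.Ioc (-S - y) (S - y))
      = ∫⁻ ω, (Set.Ioc (-S - W ω) (S - W ω)).indicator (1 : ℝ → ℝ≥0∞) y ∂P := by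
    intro y
    have hseteq : W ⁻¹' Set.Ioc (-S - y) (S - y)
        = {ω | y ∈ Set.Ioc (-S - W ω) (S - W ω)} := by
      ext ω
      simp only [Set.mem_preimage, Set.mem_Ioc, Set.mem_setOf_eq]
      constructor <;> intro h <;> exact ⟨by linarith [h.1], by linarith [h.2]⟩
    have hms : MeasurableSet {ω | y ∈ Set.Ioc (-S - W ω) (S - W ω)} :=
      hseteq ▸ hW measurableSet_Ioc
    rw [Measure.map_apply hW measurableSet_Ioc, hseteq,
      ← lintegral_indicator_one hms]
    refine lintegral_congr fun ω => ?_
    by_cases h : y ∈ Set.Ioc (-S - W ω) (S - W ω)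
    · have h' : ω ∈ {ω | y ∈ Set.Ioc (-S - W ω) (S - W ω)} := h
      rw [Set.indicator_of_mem h', Set.indicator_of_mem h]
      rfl
    · have h' : ω ∉ {ω | y ∈ Set.Ioc (-S - W ω) (S - W ω)} := h
      rw [Set.indicator_of_notMem h', Set.indicator_of_notMem h]
  have hmeasG : Measurable fun p : ℝ × Ω =>
      (Set.Ioc (-S - W p.2) (S - W p.2)).indicator (1 : ℝ → ℝ≥0∞) p.1 := by
    have hset : MeasurableSet {p : ℝ × Ω | -S - W p.2 < p.1 ∧ p.1 ≤ S - W p.2} :=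
      MeasurableSet.inter
        (measurableSet_lt (measurable_const.sub (hW.comp measurable_snd)) measurable_fst)
        (measurableSet_le measurable_fst (measurable_const.sub (hW.comp measurable_snd)))
    have he : (fun p : ℝ × Ω =>
        (Set.Ioc (-S - W p.2) (S - W p.2)).indicator (1 : ℝ → ℝ≥0∞) p.1)
        = {p : ℝ × Ω | -S - W p.2 < p.1 ∧ p.1 ≤ S - W p.2}.indicator 1 := by
      ext p
      by_cases h : p.1 ∈ Set.Ioc (-S - W p.2) (S - W p.2)
      · have h' : p ∈ {p : ℝ × Ω | -S - W p.2 < p.1 ∧ p.1 ≤ S - W p.2} := h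
        simp [Set.indicator_of_mem, h, h']
      · have h' : p ∉ {p : ℝ × Ω | -S - W p.2 < p.1 ∧ p.1 ≤ S - W p.2} := h
        simp [Set.indicator_of_notMem, h, h']
    rw [he]
    exact measurable_const.indicator hset
  have h5 : (∫⁻ y, ∫⁻ ω,
        (Set.Ioc (-S - W ω) (S - W ω)).indicator (1 : ℝ → ℝ≥0∞) y ∂P ∂volume)
      = ∫⁻ ω, ∫⁻ y,
        (Set.Ioc (-S - W ω) (S - W ω)).indicator (1 : ℝ → ℝ≥0∞) y ∂volume ∂P :=
    lintegral_lintegral_swap hmeasG.aemeasurable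
  have h6 : ∀ ω, (∫⁻ y,
        (Set.Ioc (-S - W ω) (S - W ω)).indicator (1 : ℝ → ℝ≥0∞) y ∂volume)
      = ENNReal.ofReal (2 * S) := by
    intro ω
    rw [lintegral_indicator_one measurableSet_Ioc, Real.volume_Ioc]
    congr 1
    ring
  calc (∫⁻ ω, volume {y : ℝ | X y ω ∈ Set.Ioc (-S) S} ∂P)
      = ∫⁻ ω, ∫⁻ y, g (X y ω) ∂volume ∂P := lintegral_congr fun ω => h1 ω
    _ = ∫⁻ y, ∫⁻ ω, g (X y ω) ∂P ∂volume := h2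
    _ = ∫⁻ y, ∫⁻ ω,
        (Set.Ioc (-S - W ω) (S - W ω)).indicator (1 : ℝ → ℝ≥0∞) y ∂P ∂volume :=
        lintegral_congr fun y => (h3 y).trans (h4 y)
    _ = ∫⁻ ω, ∫⁻ y,
        (Set.Ioc (-S - W ω) (S - W ω)).indicator (1 : ℝ → ℝ≥0∞) y ∂volume ∂P := h5
    _ = ∫⁻ ω, ENNReal.ofReal (2 * S) ∂P := lintegral_congr fun ω => h6 ω
    _ = ENNReal.ofReal (2 * S) := by simp
    _ ≤ ENNReal.ofReal (2 * S + 2 * ∫ ω, |W ω| ∂P) := by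
        apply ENNReal.ofReal_le_ofReal
        have : 0 ≤ ∫ ω, |W ω| ∂P := integral_nonneg fun ω => abs_nonneg _
        linarith
end

section
/- Let W be a random variable with the distribution of a centered Gaussian with variance t > 0, let f: ℝ → ℝ be measurable with |f| ≤ R and supp f ⊆ [−S, S], and let X: ℝ × Ω → ℝ be a jointly measurable random function with y ↦ X(y,·) nondecreasing a.s. and X(y,·) − y distributed as W for each y. Then for every M > S, E|∫_{|y| ≥ M} f(X(y,·)) dy| ≤ 2R · Σ_{k ≥ ⌊M⌋} P{W ≥ k − S}, and the right-hand side tends to 0 as M → ∞. -/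
/-!
Integrate `ω` first. For fixed `y`, `f (X y ω)` vanishes unless `X y ω ∈ [-S, S]`, i.e. unless
the Gaussian `X y ω - y` lies in `[-S - y, S - y]`; by symmetry this has probability at most
`P {W ≥ |y| - S}`. Since this tail is antitone in `|y|`, its integral over `|y| ≥ M` is bounded
by twice the sum of its values at the integers `k ≥ ⌊M⌋`, and the sum is finite by the
Chernoff bound `P {W ≥ k - S} ≤ e^{S - k} E e^W`. Dominated convergence for series then gives
the limit.
-/

open MeasureTheory ProbabilityTheory Filter Set
open scoped ENNReal Topology

lemma lintegral_abs_ge_le_two_mul_tsum {g : ℝ → ℝ≥0∞} (hg : Antitone g) (M : ℝ) :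
    ∫⁻ y in {y | M ≤ |y|}, g |y| ≤ 2 * ∑' k : ℕ, if (⌊M⌋ : ℝ) ≤ k then g k else 0 := by
  set c : ℕ → ℝ≥0∞ := fun k => if (⌊M⌋ : ℝ) ≤ k then g k else 0
  set I : ℕ → Set ℝ := fun k => Ico (k : ℝ) (k + 1) ∪ Ioc (-(k + 1 : ℝ)) (-k)
  have hI : ∀ k, MeasurableSet (I k) := fun k => measurableSet_Ico.union measurableSet_Ioc
  have hpt : ∀ y ∈ {y | M ≤ |y|}, g |y| ≤ ∑' k, (I k).indicator (fun _ => c k) y := by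
    intro y hy
    set k := ⌊|y|⌋₊
    have hk : (k : ℝ) ≤ |y| := Nat.floor_le (abs_nonneg y)
    have hk' : |y| < k + 1 := Nat.lt_floor_add_one _
    have hMk : (⌊M⌋ : ℝ) ≤ k := by
      rw [natCast_floor_eq_intCast_floor (abs_nonneg y)]
      exact_mod_cast Int.floor_le_floor hy
    have hyI : y ∈ I k := by
      rcases le_or_gt 0 y with h0 | h0
      · rw [abs_of_nonneg h0] at hk hk'
        exact Or.inl ⟨hk, hk'⟩
      · rw [abs_of_neg h0] at hk hk'
        exact Or.inr ⟨by linarith, by linarith⟩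
    calc g |y| ≤ c k := by simp only [c, if_pos hMk]; exact hg hk
      _ = (I k).indicator (fun _ => c k) y := (indicator_of_mem hyI (fun _ => c k)).symm
      _ ≤ _ := ENNReal.le_tsum k
  have hvol : ∀ k, volume (I k) ≤ 2 := fun k =>
    (measure_union_le _ _).trans (by simp [Real.volume_Ico, Real.volume_Ioc]; norm_num)
  calc ∫⁻ y in {y | M ≤ |y|}, g |y|
      ≤ ∫⁻ y in {y | M ≤ |y|}, ∑' k, (I k).indicator (fun _ => c k) y :=
        setLIntegral_mono (Measurable.tsum fun k => measurable_const.indicator (hI k)) hpt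
    _ ≤ ∫⁻ y, ∑' k, (I k).indicator (fun _ => c k) y := setLIntegral_le_lintegral _ _
    _ = ∑' k, c k * volume (I k) := by
        rw [lintegral_tsum fun k => (measurable_const.indicator (hI k)).aemeasurable]
        simp only [lintegral_indicator_const (hI _)]
    _ ≤ ∑' k, c k * 2 := ENNReal.tsum_le_tsum fun k => mul_le_mul_right (hvol k) _
    _ = 2 * ∑' k, c k := by rw [ENNReal.tsum_mul_right, mul_comm]

lemma tendsto_tsum_ite_floor_le {a : ℕ → ℝ} (ha : Summable a) :
    Tendsto (fun M : ℝ => ∑' k : ℕ, if (⌊M⌋ : ℝ) ≤ k then a k else 0) atTop (𝓝 0) := by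
  have hlim : ∀ k : ℕ, Tendsto (fun M : ℝ => if (⌊M⌋ : ℝ) ≤ k then a k else 0) atTop (𝓝 0) := by
    intro k
    refine tendsto_const_nhds.congr' ?_
    filter_upwards [eventually_ge_atTop ((k : ℝ) + 1)] with M hM
    rw [if_neg]
    push Not
    exact_mod_cast Int.le_floor.mpr (by exact_mod_cast hM)
  simpa using tendsto_tsum_of_dominated_convergence ha.norm hlim
    (Eventually.of_forall fun M k => by split_ifs <;> simp)

lemma summable_measureReal_Ici_sub {μ : Measure ℝ} [IsFiniteMeasure μ]
    (hμ : Integrable (fun x => Real.exp x) μ) (S : ℝ) :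
    Summable fun k : ℕ => μ.real (Ici ((k : ℝ) - S)) := by
  refine Summable.of_nonneg_of_le (fun _ => measureReal_nonneg) (fun k => ?_)
    (Real.summable_exp_neg_nat.mul_left (Real.exp S * mgf id μ 1))
  refine (measure_ge_le_exp_mul_mgf (X := id) _ zero_le_one (by simpa using hμ)).trans_eq ?_
  rw [show -1 * ((k : ℝ) - S) = S + -k by ring, Real.exp_add]
  ring

lemma measure_Icc_sub_le_Ici_abs_sub {μ : Measure ℝ} (hμ : μ.map Neg.neg = μ) (S y : ℝ) :
    μ (Icc (-S - y) (S - y)) ≤ μ (Ici (|y| - S)) := by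
  rcases le_or_gt 0 y with hy | hy
  · calc μ (Icc (-S - y) (S - y)) ≤ μ (Iic (S - y)) := measure_mono Icc_subset_Iic_self
      _ = μ (Ici (|y| - S)) := by
        rw [← hμ, Measure.map_apply measurable_neg measurableSet_Ici, abs_of_nonneg hy]
        congr 1
        ext x
        simp [le_sub_comm]
  · rw [abs_of_neg hy, neg_sub_comm]
    exact measure_mono Icc_subset_Ici_self

lemma lintegral_enorm_comp_le_mul_measure {Ω : Type*} [MeasurableSpace Ω] (P : Measure Ω)
    {f : ℝ → ℝ} {R : ℝ} (hR : ∀ x, |f x| ≤ R) {s : Set ℝ} (hs : MeasurableSet s)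
    (hsupp : Function.support f ⊆ s) {Y : Ω → ℝ} (hY : Measurable Y) :
    ∫⁻ ω, ‖f (Y ω)‖ₑ ∂P ≤ ENNReal.ofReal R * P (Y ⁻¹' s) := by
  rw [← lintegral_indicator_const_comp hY hs]
  refine lintegral_mono fun ω => ?_
  by_cases hω : Y ω ∈ s
  · rw [indicator_of_mem hω, Real.enorm_eq_ofReal_abs]
    exact ENNReal.ofReal_le_ofReal (hR _)
  · rw [Function.notMem_support.mp (fun h => hω (hsupp h))]
    simp

lemma lintegral_enorm_comp_le_mul_measure_Ici {Ω : Type*} [MeasurableSpace Ω] (P : Measure Ω)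
    {μ : Measure ℝ} (hμ : μ.map Neg.neg = μ) {f : ℝ → ℝ} {R S : ℝ} (hR : ∀ x, |f x| ≤ R)
    (hsupp : Function.support f ⊆ Icc (-S) S) {Y : Ω → ℝ} (hY : Measurable Y) (y : ℝ)
    (hlaw : P.map (fun ω => Y ω - y) = μ) :
    ∫⁻ ω, ‖f (Y ω)‖ₑ ∂P ≤ ENNReal.ofReal R * μ (Ici (|y| - S)) := by
  have hIcc : P (Y ⁻¹' Icc (-S) S) = μ (Icc (-S - y) (S - y)) := by
    rw [← hlaw, Measure.map_apply (hY.sub_const y) measurableSet_Icc]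
    congr 1
    ext ω
    simp
  calc ∫⁻ ω, ‖f (Y ω)‖ₑ ∂P ≤ ENNReal.ofReal R * P (Y ⁻¹' Icc (-S) S) :=
        lintegral_enorm_comp_le_mul_measure P hR measurableSet_Icc hsupp hY
    _ ≤ ENNReal.ofReal R * μ (Ici (|y| - S)) := by
        rw [hIcc]
        exact mul_le_mul_right (measure_Icc_sub_le_Ici_abs_sub hμ S y) _

lemma integral_abs_setIntegral_le_toReal {Ω : Type*} [MeasurableSpace Ω] (P : Measure Ω)
    {F : Ω → ℝ → ℝ} (hF : Measurable (Function.uncurry F)) (A : Set ℝ) {B : ℝ≥0∞}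
    (hB : B ≠ ∞) (h : ∫⁻ ω, (∫⁻ y in A, ‖F ω y‖ₑ) ∂P ≤ B) :
    ∫ ω, |∫ y in A, F ω y| ∂P ≤ B.toReal := by
  have hmeas : AEStronglyMeasurable (fun ω => |∫ y in A, F ω y|) P :=
    (hF.stronglyMeasurable.integral_prod_right (ν := volume.restrict A)).norm.aestronglyMeasurable
  rw [integral_eq_lintegral_of_nonneg_ae (ae_of_all _ fun _ => abs_nonneg _) hmeas]
  refine ENNReal.toReal_mono hB ((lintegral_mono fun ω => ?_).trans h)
  rw [← Real.enorm_eq_ofReal_abs]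
  exact enorm_integral_le_lintegral_enorm _

theorem integral_abs_setIntegral_abs_ge_le {Ω : Type*} [MeasurableSpace Ω] (P : Measure Ω)
    [SFinite P] {μ : Measure ℝ} [IsFiniteMeasure μ] (hμ : μ.map Neg.neg = μ) {f : ℝ → ℝ}
    (hf : Measurable f) {R S : ℝ} (hR : ∀ x, |f x| ≤ R) (hsupp : Function.support f ⊆ Icc (-S) S)
    {X : ℝ → Ω → ℝ} (hX : Measurable (Function.uncurry X))
    (hlaw : ∀ y, P.map (fun ω => X y ω - y) = μ)
    (hsum : Summable fun k : ℕ => μ.real (Ici ((k : ℝ) - S))) (M : ℝ) :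
    ∫ ω, |∫ y in {y | M ≤ |y|}, f (X y ω)| ∂P ≤
      2 * R * ∑' k : ℕ, if (⌊M⌋ : ℝ) ≤ k then μ.real (Ici ((k : ℝ) - S)) else 0 := by
  set A : Set ℝ := {y | M ≤ |y|}
  set T : ℝ≥0∞ := ∑' k : ℕ, if (⌊M⌋ : ℝ) ≤ k then μ (Ici ((k : ℝ) - S)) else 0
  have hR0 : 0 ≤ R := (abs_nonneg _).trans (hR 0)
  have hT : T ≠ ∞ := by
    have h := ENNReal.ofReal_tsum_of_nonneg (fun _ => measureReal_nonneg) hsum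
    simp only [ofReal_measureReal, ne_eq, measure_ne_top, not_false_eq_true] at h
    refine ne_top_of_le_ne_top (h ▸ ENNReal.ofReal_ne_top) (ENNReal.tsum_le_tsum fun k => ?_)
    split_ifs <;> simp
  have hT_toReal :
      T.toReal = ∑' k : ℕ, if (⌊M⌋ : ℝ) ≤ k then μ.real (Ici ((k : ℝ) - S)) else 0 := by
    rw [ENNReal.tsum_toReal_eq fun k => by split_ifs <;> simp]
    exact tsum_congr fun k => by split_ifs <;> rfl
  have hbound : ∫⁻ ω, (∫⁻ y in A, ‖f (X y ω)‖ₑ) ∂P ≤ ENNReal.ofReal R * (2 * T) := by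
    rw [lintegral_lintegral_swap (hf.comp (hX.comp measurable_swap)).enorm.aemeasurable]
    calc ∫⁻ y in A, ∫⁻ ω, ‖f (X y ω)‖ₑ ∂P
        ≤ ∫⁻ y in A, ENNReal.ofReal R * μ (Ici (|y| - S)) := lintegral_mono fun y =>
          lintegral_enorm_comp_le_mul_measure_Ici P hμ hR hsupp
            (hX.comp measurable_prodMk_left) y (hlaw y)
      _ = ENNReal.ofReal R * ∫⁻ y in A, μ (Ici (|y| - S)) :=
          lintegral_const_mul' _ _ ENNReal.ofReal_ne_top
      _ ≤ ENNReal.ofReal R * (2 * T) := mul_le_mul_right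
          (lintegral_abs_ge_le_two_mul_tsum (g := fun c => μ (Ici (c - S)))
            (fun a b hab => measure_mono (Ici_subset_Ici.2 (by linarith))) M) _
  calc ∫ ω, |∫ y in A, f (X y ω)| ∂P ≤ (ENNReal.ofReal R * (2 * T)).toReal :=
        integral_abs_setIntegral_le_toReal P (F := fun ω y => f (X y ω))
          (hf.comp (hX.comp measurable_swap)) A (by finiteness) hbound
    _ = _ := by
        rw [ENNReal.toReal_mul, ENNReal.toReal_mul, ENNReal.toReal_ofReal hR0, hT_toReal]
        simp only [ENNReal.toReal_ofNat]
        ring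

theorem stmt_12_general {Ω : Type*} {m : MeasurableSpace Ω} (P : Measure Ω)
    [IsProbabilityMeasure P]
    (t : NNReal)
    (W : Ω → ℝ) (hW : Measurable W) (hWlaw : P.map W = gaussianReal 0 t)
    (f : ℝ → ℝ) (hf : Measurable f)
    (R S : ℝ) (hR : ∀ y, |f y| ≤ R)
    (hsupp : Function.support f ⊆ Set.Icc (-S) S)
    (X : ℝ → Ω → ℝ)
    (hXmeas : Measurable (Function.uncurry X))
    (hlaw : ∀ y : ℝ, P.map (fun ω => X y ω - y) = P.map W)
    (G : ℝ → ℝ)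
    (hG : ∀ M : ℝ, G M = 2 * R * ∑' k : ℕ,
        if (⌊M⌋ : ℝ) ≤ (k : ℝ)
        then (P {ω | (k : ℝ) - S ≤ W ω}).toReal else 0) :
    (∀ M : ℝ, S < M →
      (∫ ω, |∫ y in {y : ℝ | M ≤ |y|}, f (X y ω)| ∂P) ≤ G M) ∧
    Tendsto G atTop (nhds 0) := by
  have hsymm : (gaussianReal 0 t).map Neg.neg = gaussianReal 0 t := by
    simpa using gaussianReal_map_neg (μ := 0) (v := t)
  have hW_Ici : ∀ c, P {ω | c ≤ W ω} = gaussianReal 0 t (Ici c) := fun c => by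
    rw [← hWlaw, Measure.map_apply hW measurableSet_Ici]
    rfl
  have hexp : Integrable (fun x => Real.exp x) (gaussianReal 0 t) := by
    simpa using integrable_exp_mul_gaussianReal (μ := 0) (v := t) 1
  have hsum := summable_measureReal_Ici_sub hexp S
  have hG' : G = fun M => 2 * R * ∑' k : ℕ,
      if (⌊M⌋ : ℝ) ≤ k then (gaussianReal 0 t).real (Ici ((k : ℝ) - S)) else 0 := by
    funext M
    simp only [hG, hW_Ici]
    rfl
  rw [hG']
  refine ⟨fun M _ => integral_abs_setIntegral_abs_ge_le P hsymm hf hR hsupp hXmeas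
    (fun y => (hlaw y).trans hWlaw) hsum M, ?_⟩
  simpa using (tendsto_tsum_ite_floor_le hsum).const_mul (2 * R)

/-- Tail bound for the integral of `f ∘ X` outside `[-M, M]`, for a monotone random
function with Gaussian one-point increments, and its vanishing as `M → ∞`. -/
theorem stmt_12 {Ω : Type*} {m : MeasurableSpace Ω} (P : Measure Ω)
    [IsProbabilityMeasure P]
    (t : NNReal) (ht : 0 < t)
    (W : Ω → ℝ) (hW : Measurable W) (hWlaw : P.map W = gaussianReal 0 t)
    (f : ℝ → ℝ) (hf : Measurable f)
    (R S : ℝ) (hS : 0 < S) (hR : ∀ y, |f y| ≤ R)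
    (hsupp : Function.support f ⊆ Set.Icc (-S) S)
    (X : ℝ → Ω → ℝ)
    (hXmeas : Measurable (Function.uncurry X))
    (hmono : ∀ᵐ ω ∂P, Monotone fun y => X y ω)
    (hlaw : ∀ y : ℝ, P.map (fun ω => X y ω - y) = P.map W)
    (G : ℝ → ℝ)
    (hG : ∀ M : ℝ, G M = 2 * R * ∑' k : ℕ,
        if (⌊M⌋ : ℝ) ≤ (k : ℝ)
        then (P {ω | (k : ℝ) - S ≤ W ω}).toReal else 0) :
    (∀ M : ℝ, S < M →
      (∫ ω, |∫ y in {y : ℝ | M ≤ |y|}, f (X y ω)| ∂P) ≤ G M) ∧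
    Tendsto G atTop (nhds 0) :=
  stmt_12_general (m := m) P t W hW hWlaw f hf R S hR hsupp X hXmeas hlaw G hG
end
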